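/- arXiv:math/0511465 — 3 statements merged into one kernel-verified Lean document; each statement's English description precedes it below -/
import Mathlib

section
/- Let T be a locally finite tree and Γ ≤ Aut(T) a subgroup such that the quotient graph Γ\T is finite and all edge stabilizers in Γ are finite. Then the action of Γ on T fails to be k-acylindrical for every k ≥ 1 if and only if there exist h, g ∈ Γ such that: h is nontrivial and has a fixed point in T, g has no fixed point in T, and h and g commute. -/
/-!
Suppose nontrivial elements fix arbitrarily long locally injective paths. Up to the action of `Γ`
(by `δ • (u, v, γ) = (δ • u, δ • v, δ γ δ⁻¹)`) there are only finitely many pairs of an edge and an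
element fixing it, so on a long enough path fixed by `γ ≠ 1` two edges `(p i, p (i+1))` and
`(p j, p (j+1))`, `i < j`, are related by some `g` commuting with `γ`. The `g`-translates of the
segment `p i, …, p j` fit together into a locally injective path, hence into a geodesic of the
tree, so `d(a, gᵐ a)` grows linearly and `g` has no fixed point.

Conversely, let `h ≠ 1` fix `x` and commute with a fixed-point-free `g`. A geodesic from a vertex
`x₀` of minimal displacement to `g • x₀` is such a segment for `g` (absence of inversions and
minimality prevent backtracking at `g • x₀`), so `d(x, gᵐ x) → ∞`. As `h` fixes both `x` and
`gᵐ x = gᵐ (h x) = h (gᵐ x)`, it fixes the geodesic between them pointwise.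
-/

namespace SimpleGraph

variable {V : Type*} {G : SimpleGraph V}

structure IsLocallyInjectivePath (G : SimpleGraph V) (p : ℕ → V) (n : ℕ) : Prop where
  adj : ∀ i < n, G.Adj (p i) (p (i + 1))
  ne : ∀ i, i + 2 ≤ n → p (i + 2) ≠ p i

namespace IsLocallyInjectivePath

variable {p : ℕ → V} {n : ℕ}

theorem mono (hp : G.IsLocallyInjectivePath p n) {k : ℕ} (hk : k ≤ n) :
    G.IsLocallyInjectivePath p k :=
  ⟨fun i hi ↦ hp.adj i (by omega), fun i hi ↦ hp.ne i (by omega)⟩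

theorem shift (hp : G.IsLocallyInjectivePath p n) {i k : ℕ} (h : i + k ≤ n) :
    G.IsLocallyInjectivePath (fun t ↦ p (i + t)) k :=
  ⟨fun t ht ↦ hp.adj (i + t) (by omega), fun t ht ↦ hp.ne (i + t) (by omega)⟩

end IsLocallyInjectivePath

theorem Walk.IsPath.isLocallyInjectivePath {u v : V} {P : G.Walk u v} (hP : P.IsPath) :
    G.IsLocallyInjectivePath P.getVert P.length where
  adj _ hi := P.adj_getVert_succ hi
  ne i hi h := by
    have := hP.getVert_injOn (show i + 2 ≤ P.length by omega) (show i ≤ P.length by omega) h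
    omega

theorem IsAcyclic.exists_isPath_of_isLocallyInjectivePath (hG : G.IsAcyclic) {p : ℕ → V}
    {n : ℕ} (hp : G.IsLocallyInjectivePath p n) :
    ∃ w : G.Walk (p 0) (p n), w.IsPath ∧ w.length = n ∧ ∀ i ≤ n, w.getVert i = p i := by
  induction n with
  | zero => exact ⟨.nil, .nil, rfl, fun i hi ↦ by simp [Nat.le_zero.1 hi]⟩
  | succ n ih =>
    obtain ⟨w, hw, hlen, hget⟩ := ih (hp.mono n.le_succ)
    have hadj := hp.adj n n.lt_succ_self
    have hnot : p (n + 1) ∉ w.support := by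
      intro hmem
      have hpen : p (n + 1) = p (n - 1) := by
        rw [hG.eq_penultimate_of_adj_end hw hadj hmem, Walk.penultimate, hlen,
          hget _ (Nat.sub_le n 1)]
      rcases n with _ | n
      · exact hadj.ne hpen.symm
      · exact hp.ne n (by omega) hpen
    refine ⟨w.concat hadj, hw.concat hnot hadj, by simp [hlen], fun i hi ↦ ?_⟩
    rcases Nat.le_succ_iff.1 hi with hi | rfl
    · rw [Walk.concat_eq_append, Walk.getVert_append', if_pos (hlen.symm ▸ hi), hget i hi]
    · exact Walk.getVert_of_length_le _ (by simp [hlen])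

theorem IsAcyclic.length_eq_dist_of_isPath (hG : G.IsAcyclic) {u v : V} {w : G.Walk u v}
    (hw : w.IsPath) : w.length = G.dist u v := by
  obtain ⟨q, hq, hqlen⟩ := w.reachable.exists_path_of_dist
  rw [← hqlen, Subtype.mk.inj ((hG.subsingleton_path u v).elim ⟨w, hw⟩ ⟨q, hq⟩)]

theorem IsAcyclic.dist_eq_of_isLocallyInjectivePath (hG : G.IsAcyclic) {p : ℕ → V} {n : ℕ}
    (hp : G.IsLocallyInjectivePath p n) : G.dist (p 0) (p n) = n := by
  obtain ⟨w, hw, hlen, -⟩ := hG.exists_isPath_of_isLocallyInjectivePath hp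
  rw [← hG.length_eq_dist_of_isPath hw, hlen]

theorem Hom.dist_map_le {W : Type*} {G' : SimpleGraph W} (f : G →g G') {u v : V}
    (h : G.Reachable u v) : G'.dist (f u) (f v) ≤ G.dist u v := by
  obtain ⟨w, hw⟩ := h.exists_walk_length_eq_dist
  simpa [hw] using dist_le (w.map f)

theorem Iso.dist_map {W : Type*} {G' : SimpleGraph W} (f : G ≃g G') (u v : V) :
    G'.dist (f u) (f v) = G.dist u v := by
  by_cases h : G.Reachable u v
  · refine le_antisymm (f.toHom.dist_map_le h) ?_
    simpa using f.symm.toHom.dist_map_le (h.map f.toHom)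
  · rw [dist_eq_zero_of_not_reachable h, dist_eq_zero_of_not_reachable (mt Iso.reachable_iff.1 h)]

theorem IsAcyclic.apply_getVert_eq_of_isPath (hG : G.IsAcyclic) (f : G ≃g G) {u v : V}
    (hu : f u = u) (hv : f v = v) {P : G.Walk u v} (hP : P.IsPath) (i : ℕ) :
    f (P.getVert i) = P.getVert i := by
  have hQ : ((P.map f.toHom).copy hu hv).IsPath :=
    (Walk.isPath_copy _ _ _).2 (hP.map f.injective)
  have hQP := Subtype.mk.inj ((hG.subsingleton_path u v).elim ⟨_, hQ⟩ ⟨P, hP⟩)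
  conv_rhs => rw [← hQP]
  simp [Walk.getVert_map]

section AxisSegment

variable {Γ : Type*} [Monoid Γ] [MulAction Γ V]

def periodicExtension (g : Γ) (s : ℕ → V) (L t : ℕ) : V :=
  g ^ (t / L) • s (t % L)

/-- `s 0, …, s L` is a fundamental domain of an axis of `g`: `ne` rules out backtracking where the
segment meets its `g`-translate at `s L = g • s 0`. -/
structure IsAxisSegment (G : SimpleGraph V) (g : Γ) (s : ℕ → V) (L : ℕ) : Prop where
  pos : 0 < L
  isLocallyInjectivePath : G.IsLocallyInjectivePath s L
  end_eq : s L = g • s 0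
  ne : s (L - 1) ≠ g • s 1

theorem IsAxisSegment.periodicExtension_apply {g : Γ} {s : ℕ → V} {L : ℕ}
    (hs : G.IsAxisSegment g s L) {c r : ℕ} (hr : r ≤ L) :
    periodicExtension g s L (L * c + r) = g ^ c • s r := by
  have hL := hs.pos
  rcases hr.lt_or_eq with hr | hr
  · simp [periodicExtension, Nat.mul_add_div hL, Nat.mod_eq_of_lt hr, Nat.div_eq_of_lt hr]
  · rw [hr, show L * c + L = L * (c + 1) by ring, hs.end_eq]
    simp [periodicExtension, hL, pow_succ, mul_smul]

theorem IsLocallyInjectivePath.isAxisSegment {p : ℕ → V} {n i j : ℕ}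
    (hp : G.IsLocallyInjectivePath p n) (hij : i < j) (hjn : j < n) {g : Γ}
    (hgi : g • p i = p j) (hgi' : g • p (i + 1) = p (j + 1)) :
    G.IsAxisSegment g (fun t ↦ p (i + t)) (j - i) where
  pos := by omega
  isLocallyInjectivePath := hp.shift (by omega)
  end_eq := by simp [hgi, show i + (j - i) = j by omega]
  ne := by
    rw [hgi', show i + (j - i - 1) = j - 1 by omega]
    simpa [show j - 1 + 2 = j + 1 by omega] using (hp.ne (j - 1) (by omega)).symm

theorem IsTree.exists_isAxisSegment (hG : G.IsTree) {g : Γ}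
    (hinv : ∀ u v : V, G.Adj u v → ¬(g • u = v ∧ g • v = u)) (hg : ∀ y : V, g • y ≠ y) :
    ∃ (s : ℕ → V) (L : ℕ), G.IsAxisSegment g s L := by
  have := hG.connected.nonempty
  set x₀ := Function.argmin fun x ↦ G.dist x (g • x)
  have hmin (y : V) : G.dist x₀ (g • x₀) ≤ G.dist y (g • y) :=
    Function.argmin_le (fun x ↦ G.dist x (g • x)) y
  obtain ⟨A, hA, hlen⟩ := hG.connected.exists_path_of_dist x₀ (g • x₀)
  have hpos : 0 < A.length := hlen ▸ hG.connected.pos_dist_of_ne (hg x₀).symm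
  refine ⟨A.getVert, A.length, hpos, hA.isLocallyInjectivePath, by simp, fun hback ↦ ?_⟩
  -- Backtracking at `g • x₀` is an inversion of an edge, or shortens the displacement of `A 1`.
  rcases (by omega : A.length = 1 ∨ 2 ≤ A.length) with h1 | h2
  · have hend : A.getVert 1 = g • x₀ := A.getVert_of_length_le h1.le
    have hadj : G.Adj x₀ (g • x₀) := by simpa [hend] using A.adj_getVert_succ hpos
    rw [h1, Nat.sub_self, Walk.getVert_zero, hend] at hback
    exact hinv _ _ hadj ⟨rfl, hback.symm⟩
  · have hshort := hG.isAcyclic.dist_eq_of_isLocallyInjectivePath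
      (hA.isLocallyInjectivePath.shift (i := 1) (k := A.length - 2) (by omega))
    rw [Nat.add_zero, show 1 + (A.length - 2) = A.length - 1 by omega, hback] at hshort
    have := hmin (A.getVert 1)
    omega

end AxisSegment

section Action

variable {Γ : Type*} [Group Γ] [MulAction Γ V]

theorem exists_commute_smul_eq_of_card_lt (T : Finset (V × V × Γ))
    (hT : ∀ (u v : V) (γ : Γ), G.Adj u v → γ • u = u → γ • v = v →
      ∃ δ : Γ, (δ • u, δ • v, δ * γ * δ⁻¹) ∈ T)
    (p : ℕ → V) (γ : Γ) (hadj : ∀ i ≤ T.card, G.Adj (p i) (p (i + 1)))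
    (hfix : ∀ i ≤ T.card + 1, γ • p i = p i) :
    ∃ (i j : ℕ) (g : Γ), i < j ∧ j ≤ T.card ∧ g • p i = p j ∧ g • p (i + 1) = p (j + 1) ∧
      γ * g = g * γ := by
  have hδ : ∀ i ≤ T.card, ∃ δ : Γ, (δ • p i, δ • p (i + 1), δ * γ * δ⁻¹) ∈ T := fun i hi ↦
    hT _ _ _ (hadj i hi) (hfix i (by omega)) (hfix (i + 1) (by omega))
  choose! δ hδ using hδ
  set f : ℕ → V × V × Γ := fun i ↦ (δ i • p i, δ i • p (i + 1), δ i * γ * (δ i)⁻¹)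
  obtain ⟨a, ha, b, hb, hab, hfab⟩ := Finset.exists_ne_map_eq_of_card_lt_of_maps_to
    (s := Finset.range (T.card + 1)) (t := T) (f := f) (by simp)
    (fun i hi ↦ hδ i (Nat.lt_succ_iff.1 (Finset.mem_range.1 hi)))
  obtain ⟨i, j, hij, hjT, hfij⟩ : ∃ i j, i < j ∧ j ≤ T.card ∧ f i = f j := by
    simp only [Finset.mem_range] at ha hb
    rcases lt_or_gt_of_ne hab with h | h
    · exact ⟨a, b, h, by omega, hfab⟩
    · exact ⟨b, a, h, by omega, hfab.symm⟩
  simp only [f, Prod.mk.injEq] at hfij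
  obtain ⟨h₀, h₁, hγ⟩ := hfij
  refine ⟨i, j, (δ j)⁻¹ * δ i, hij, hjT, ?_, ?_, ?_⟩
  · rw [mul_smul, h₀, inv_smul_smul]
  · rw [mul_smul, h₁, inv_smul_smul]
  · have := congrArg (fun x ↦ (δ j)⁻¹ * x * δ i) hγ
    group at this ⊢
    rw [this]

variable (hAdj : ∀ (γ : Γ) (u v : V), G.Adj u v → G.Adj (γ • u) (γ • v))
include hAdj

def smulIso (γ : Γ) : G ≃g G where
  toEquiv := MulAction.toPerm γ
  map_rel_iff' {u v} := ⟨fun h ↦ by simpa using hAdj γ⁻¹ _ _ h, hAdj γ u v⟩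

theorem dist_smul (γ : Γ) (u v : V) : G.dist (γ • u) (γ • v) = G.dist u v :=
  (smulIso hAdj γ).dist_map u v

theorem isLocallyInjectivePath_periodicExtension {g : Γ} {s : ℕ → V} {L : ℕ}
    (hs : G.IsAxisSegment g s L) (n : ℕ) :
    G.IsLocallyInjectivePath (periodicExtension g s L) n := by
  have hL := hs.pos
  have split (t : ℕ) : t = L * (t / L) + t % L := (Nat.div_add_mod t L).symm
  have hr (t : ℕ) : t % L < L := Nat.mod_lt t hL
  constructor
  · intro t _
    rw [split t, show L * (t / L) + t % L + 1 = L * (t / L) + (t % L + 1) by omega,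
      hs.periodicExtension_apply (hr t).le, hs.periodicExtension_apply (hr t)]
    exact hAdj _ _ _ (hs.isLocallyInjectivePath.adj _ (hr t))
  · intro t _
    have := hr t
    rw [split t, hs.periodicExtension_apply (hr t).le]
    by_cases h : t % L + 2 ≤ L
    · rw [show L * (t / L) + t % L + 2 = L * (t / L) + (t % L + 2) by omega,
        hs.periodicExtension_apply h]
      exact fun he ↦ hs.isLocallyInjectivePath.ne _ h (smul_left_cancel _ he)
    · rw [show L * (t / L) + t % L + 2 = L * (t / L + 1) + 1 by rw [Nat.mul_succ]; omega,
        hs.periodicExtension_apply (by omega), pow_succ, mul_smul, show t % L = L - 1 by omega]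
      exact fun he ↦ hs.ne (smul_left_cancel _ he).symm

theorem IsAcyclic.dist_pow_smul_eq (hG : G.IsAcyclic) {g : Γ} {s : ℕ → V} {L : ℕ}
    (hs : G.IsAxisSegment g s L) (m : ℕ) : G.dist (s 0) (g ^ m • s 0) = m * L := by
  have := hG.dist_eq_of_isLocallyInjectivePath
    (isLocallyInjectivePath_periodicExtension hAdj hs (m * L))
  simpa [periodicExtension, hs.pos.ne'] using this

theorem IsTree.le_dist_pow_smul_add (hG : G.IsTree) {g : Γ} {s : ℕ → V} {L : ℕ}
    (hs : G.IsAxisSegment g s L) (y : V) (m : ℕ) :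
    m ≤ G.dist y (g ^ m • y) + 2 * G.dist (s 0) y := by
  have hm : m ≤ G.dist (s 0) (g ^ m • s 0) :=
    hG.isAcyclic.dist_pow_smul_eq hAdj hs m ▸ Nat.le_mul_of_pos_right m hs.pos
  have h₁ := hG.connected.dist_triangle (u := s 0) (v := y) (w := g ^ m • s 0)
  have h₂ := hG.connected.dist_triangle (u := y) (v := g ^ m • y) (w := g ^ m • s 0)
  have h₃ : G.dist (g ^ m • y) (g ^ m • s 0) = G.dist (s 0) y := by
    rw [dist_smul hAdj, dist_comm]
  omega

theorem IsTree.smul_ne_self_of_isAxisSegment (hG : G.IsTree) {g : Γ} {s : ℕ → V} {L : ℕ}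
    (hs : G.IsAxisSegment g s L) (y : V) : g • y ≠ y := by
  intro hy
  have := hG.le_dist_pow_smul_add hAdj hs y (2 * G.dist (s 0) y + 1)
  have hpow (n : ℕ) : g ^ n • y = y := by
    rw [← zpow_natCast]
    exact MulAction.mem_fixedBy_zpow (show y ∈ MulAction.fixedBy V g from hy) n
  rw [hpow, dist_self] at this
  omega

theorem exists_finset_conj_mem_of_fixed_edge [G.LocallyFinite]
    (hquot : Finite (Quotient (MulAction.orbitRel Γ V)))
    (hedge : ∀ u v : V, G.Adj u v → Finite {γ : Γ // γ • u = u ∧ γ • v = v}) :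
    ∃ T : Finset (V × V × Γ), ∀ (u v : V) (γ : Γ), G.Adj u v → γ • u = u → γ • v = v →
      ∃ δ : Γ, (δ • u, δ • v, δ * γ * δ⁻¹) ∈ T := by
  set S := Set.range (Quotient.out : Quotient (MulAction.orbitRel Γ V) → V)
  have hF : (⋃ u ∈ S, ⋃ v ∈ G.neighborSet u,
      {u} ×ˢ {v} ×ˢ {γ : Γ | γ • u = u ∧ γ • v = v}).Finite :=
    (Set.finite_range _).biUnion fun u _ ↦ (G.neighborSet u).toFinite.biUnion fun v hv ↦
      (Set.finite_singleton u).prod ((Set.finite_singleton v).prod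
        (Set.finite_coe_iff.1 (hedge u v hv)))
  refine ⟨hF.toFinset, fun u v γ huv hu hv ↦ ?_⟩
  obtain ⟨δ, hδ⟩ : ∃ δ : Γ, δ • u = Quotient.out (⟦u⟧ : Quotient (MulAction.orbitRel Γ V)) :=
    MulAction.mem_orbit_iff.1 (MulAction.orbitRel_apply.1 (Quotient.mk_out u))
  refine ⟨δ, ?_⟩
  simp only [Set.Finite.mem_toFinset, Set.mem_iUnion, Set.mem_prod, Set.mem_singleton_iff,
    Set.mem_ofPred_eq]
  refine ⟨δ • u, ⟨_, hδ.symm⟩, δ • v, hAdj δ u v huv, rfl, rfl, ?_, ?_⟩ <;>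
    simp [mul_smul, hu, hv]

end Action

end SimpleGraph

open SimpleGraph

theorem stmt_6_general {V : Type*} (G : SimpleGraph V) (hT : G.IsTree) [G.LocallyFinite]
    (Γ : Type*) [Group Γ] [MulAction Γ V]
    (hAdj : ∀ (γ : Γ) (u v : V), G.Adj u v → G.Adj (γ • u) (γ • v))
    (hnoinv : ∀ (γ : Γ) (u v : V), G.Adj u v → ¬(γ • u = v ∧ γ • v = u))
    (hquot : Finite (Quotient (MulAction.orbitRel Γ V)))
    (hedge : ∀ u v : V, G.Adj u v → Finite {γ : Γ // γ • u = u ∧ γ • v = v}) :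
    (∀ k : ℕ, 1 ≤ k → ∃ (p : ℕ → V) (γ : Γ), γ ≠ 1 ∧
        (∀ i < k, G.Adj (p i) (p (i + 1))) ∧
        (∀ i : ℕ, i + 2 ≤ k → p (i + 2) ≠ p i) ∧
        (∀ i ≤ k, γ • p i = p i)) ↔
      ∃ h g : Γ, h ≠ 1 ∧ (∃ x : V, h • x = x) ∧ (∀ y : V, g • y ≠ y) ∧
        h * g = g * h := by
  constructor
  · intro hfix
    obtain ⟨T, hTconj⟩ := exists_finset_conj_mem_of_fixed_edge hAdj hquot hedge
    obtain ⟨p, γ, hγ, hadj, hne, hγp⟩ := hfix (T.card + 2) (by omega)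
    obtain ⟨i, j, g, hij, hjT, hgi, hgi', hcomm⟩ := exists_commute_smul_eq_of_card_lt T hTconj p γ
      (fun i hi ↦ hadj i (by omega)) (fun i hi ↦ hγp i (by omega))
    have hs := IsLocallyInjectivePath.isAxisSegment ⟨hadj, hne⟩ hij (by omega) hgi hgi'
    exact ⟨γ, g, hγ, ⟨p 0, hγp 0 (by omega)⟩, hT.smul_ne_self_of_isAxisSegment hAdj hs, hcomm⟩
  · rintro ⟨h, g, hh, ⟨x, hx⟩, hg, hcomm⟩ k -
    obtain ⟨s, L, hs⟩ := hT.exists_isAxisSegment (hnoinv g) hg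
    set m := k + 2 * G.dist (s 0) x
    have hk : k ≤ G.dist x (g ^ m • x) := by
      have := hT.le_dist_pow_smul_add hAdj hs x m
      omega
    have hxm : h • g ^ m • x = g ^ m • x := by
      rw [← mul_smul, (Commute.pow_right hcomm m).eq, mul_smul, hx]
    obtain ⟨P, hP, hPlen⟩ := hT.connected.exists_path_of_dist x (g ^ m • x)
    have hP' := hP.isLocallyInjectivePath.mono (hPlen ▸ hk)
    exact ⟨P.getVert, h, hh, hP'.adj, hP'.ne, fun i _ ↦
      hT.isAcyclic.apply_getVert_eq_of_isPath (smulIso hAdj h) hx hxm hP i⟩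

/-- Let `Γ` act faithfully, without inversion, by automorphisms on a locally
finite tree `T`, with finite quotient and finite edge stabilizers.  Then the
action fails to be `k`-acylindrical for every `k ≥ 1` (i.e. for each `k` some
nontrivial element fixes pointwise a locally injective path of `k` edges) if
and only if there are `h, g ∈ Γ` with `h ≠ 1` having a fixed point, `g`
without fixed point, and `h` and `g` commuting. -/
theorem stmt_6 {V : Type*} (G : SimpleGraph V) (hT : G.IsTree) [G.LocallyFinite]
    (Γ : Type*) [Group Γ] [MulAction Γ V]
    (hAdj : ∀ (γ : Γ) (u v : V), G.Adj u v → G.Adj (γ • u) (γ • v))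
    (hfaith : ∀ γ : Γ, (∀ v : V, γ • v = v) → γ = 1)
    (hnoinv : ∀ (γ : Γ) (u v : V), G.Adj u v → ¬(γ • u = v ∧ γ • v = u))
    (hquot : Finite (Quotient (MulAction.orbitRel Γ V)))
    (hedge : ∀ u v : V, G.Adj u v → Finite {γ : Γ // γ • u = u ∧ γ • v = v}) :
    (∀ k : ℕ, 1 ≤ k → ∃ (p : ℕ → V) (γ : Γ), γ ≠ 1 ∧
        (∀ i < k, G.Adj (p i) (p (i + 1))) ∧
        (∀ i : ℕ, i + 2 ≤ k → p (i + 2) ≠ p i) ∧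
        (∀ i ≤ k, γ • p i = p i)) ↔
      ∃ h g : Γ, h ≠ 1 ∧ (∃ x : V, h • x = x) ∧ (∀ y : V, g • y ≠ y) ∧
        h * g = g * h :=
  stmt_6_general G hT Γ hAdj hnoinv hquot hedge
end

section
/- Let T be a tree, Γ ≤ Aut(T), x₀ a vertex, ξ a boundary point such that the geodesic ray from x₀ to ξ meets the orbit Γx₀ in infinitely many points. Let S be the set of γ ∈ Γ \ Γ_{x₀} such that the open geodesic segment ]x₀, γx₀[ contains no point of Γx₀. Then there is a unique coset αΓ_{x₀} with α ∈ S such that the ray from x₀ to ξ passes through αx₀ as its first point of Γx₀ \ {x₀}; consequently the set ∂₀T of such boundary points ξ is the disjoint union over α ∈ S/Γ_{x₀} of the sets ∂_{e_α^+}T ∩ ∂₀T. -/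
open SimpleGraph

private def rayWalk {V : Type*} {G : SimpleGraph V} (r : ℕ → V)
    (hradj : ∀ n, G.Adj (r n) (r (n + 1))) : ∀ n, G.Walk (r 0) (r n)
  | 0 => Walk.nil
  | n + 1 => (rayWalk r hradj n).concat (hradj n)

private lemma rayWalk_length {V : Type*} {G : SimpleGraph V} (r : ℕ → V)
    (hradj : ∀ n, G.Adj (r n) (r (n + 1))) (n : ℕ) :
    (rayWalk r hradj n).length = n := by
  induction n with
  | zero => rfl
  | succ n ih => simp [rayWalk, Walk.length_concat, ih]

private lemma rayWalk_getVert {V : Type*} {G : SimpleGraph V} (r : ℕ → V)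
    (hradj : ∀ n, G.Adj (r n) (r (n + 1))) (n m : ℕ) (hm : m ≤ n) :
    (rayWalk r hradj n).getVert m = r m := by
  induction n with
  | zero =>
    interval_cases m
    exact Walk.getVert_zero _
  | succ n ih =>
    simp only [rayWalk, Walk.concat, Walk.getVert_append, rayWalk_length]
    rcases lt_or_ge m n with h | h
    · simp [h, ih h.le]
    · rw [if_neg (by omega)]
      rcases Nat.eq_or_lt_of_le h with rfl | h'
      · simp [Walk.getVert_zero]
      · have hm1 : m = n + 1 := by omega
        subst hm1
        have h2 : n + 1 - n = 1 := by omega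
        rw [h2]
        rfl

/-- Let `Γ` act by automorphisms on a tree `T`, `x₀` a vertex, and `ξ` a
boundary point, encoded by a geodesic ray `r` from `x₀`, meeting the orbit
`Γx₀` infinitely often.  Let `S` be the set of `γ ∈ Γ \ Γ_{x₀}` such that the
open segment `]x₀, γx₀[` contains no orbit point.  Then there is an `α ∈ S`
such that `αx₀` is the first point of `Γx₀ \ {x₀}` on the ray, and it is
unique up to the coset `αΓ_{x₀}` (i.e. any `β ∈ S` with the same property
satisfies `βx₀ = αx₀`); this expresses that `∂₀T` is the disjoint union over
`α ∈ S/Γ_{x₀}` of the shadows `∂_{e_α^+}T ∩ ∂₀T`. -/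
theorem stmt_11 {V : Type*} (G : SimpleGraph V) (hT : G.IsTree)
    (Γ : Type*) [Group Γ] [MulAction Γ V]
    (hAdj : ∀ (γ : Γ) (u v : V), G.Adj u v → G.Adj (γ • u) (γ • v))
    (x₀ : V) (r : ℕ → V) (hr0 : r 0 = x₀)
    (hradj : ∀ n, G.Adj (r n) (r (n + 1)))
    (hrgeo : ∀ n, G.dist x₀ (r n) = n)
    (hinf : {n : ℕ | r n ∈ MulAction.orbit Γ x₀}.Infinite) :
    ∃ (α : Γ) (n : ℕ),
      (α • x₀ ≠ x₀ ∧ ∀ v ∈ MulAction.orbit Γ x₀, v ≠ x₀ → v ≠ α • x₀ →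
        G.dist x₀ v + G.dist v (α • x₀) ≠ G.dist x₀ (α • x₀)) ∧
      0 < n ∧ r n = α • x₀ ∧
      (∀ m : ℕ, 0 < m → m < n → r m ∉ MulAction.orbit Γ x₀) ∧
      ∀ (β : Γ) (n' : ℕ),
        (β • x₀ ≠ x₀ ∧ ∀ v ∈ MulAction.orbit Γ x₀, v ≠ x₀ → v ≠ β • x₀ →
          G.dist x₀ v + G.dist v (β • x₀) ≠ G.dist x₀ (β • x₀)) →
        0 < n' → r n' = β • x₀ →
        (∀ m : ℕ, 0 < m → m < n' → r m ∉ MulAction.orbit Γ x₀) →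
        β • x₀ = α • x₀ := by
  classical
  subst hr0
  have hconn := hT.isConnected
  have hacyc := hT.IsAcyclic
  -- there is a positive index in the orbit
  have hex : ∃ k, 0 < k ∧ r k ∈ MulAction.orbit Γ (r 0) := by
    obtain ⟨k, hk, hk0⟩ := (hinf.diff (Set.finite_singleton 0)).nonempty
    exact ⟨k, Nat.pos_of_ne_zero (by simpa using hk0), hk⟩
  set n := Nat.find hex with hn_def
  obtain ⟨hnpos, hnorb⟩ := Nat.find_spec hex
  have hmin : ∀ m : ℕ, 0 < m → m < n → r m ∉ MulAction.orbit Γ (r 0) :=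
    fun m hm hmn hmem => Nat.find_min hex hmn ⟨hm, hmem⟩
  obtain ⟨α, hα⟩ := hnorb
  have hα' : α • r 0 = r n := hα
  have hrn_ne : r n ≠ r 0 := by
    intro h
    have := hrgeo n
    rw [h, SimpleGraph.dist_self] at this
    omega
  refine ⟨α, n, ⟨by rw [hα']; exact hrn_ne, ?_⟩, hnpos, hα'.symm, hmin, ?_⟩
  · -- the S-condition
    intro v hv hv0 hvα heq
    rw [hα'] at heq hvα
    rw [hrgeo n] at heq
    set d := G.dist (r 0) v with hd_def
    have hd0 : d ≠ 0 := by
      intro h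
      exact hv0 (hconn.dist_eq_zero_iff.mp h).symm
    have hq0 : G.dist v (r n) ≠ 0 := by
      intro h
      exact hvα (hconn.dist_eq_zero_iff.mp h)
    obtain ⟨p, hp⟩ := hconn.exists_walk_length_eq_dist (r 0) v
    obtain ⟨q, hq⟩ := hconn.exists_walk_length_eq_dist v (r n)
    have hW : (p.append q).length = G.dist (r 0) (r n) := by
      rw [Walk.length_append, hp, hq, hrgeo n, heq]
    have hWpath := (p.append q).isPath_of_length_eq_dist hW
    have hRpath : (rayWalk r hradj n).IsPath :=
      (rayWalk r hradj n).isPath_of_length_eq_dist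
        (by rw [rayWalk_length, hrgeo n])
    have hpaths := hacyc.path_unique ⟨p.append q, hWpath⟩ ⟨rayWalk r hradj n, hRpath⟩
    have hWR : p.append q = rayWalk r hradj n := congrArg Subtype.val hpaths
    have hdn : d < n := by
      have := hW
      rw [Walk.length_append, hp, hq, hrgeo n] at this
      omega
    have hv_eq : v = r d := by
      have h1 : (p.append q).getVert d = v := by
        rw [Walk.getVert_append, hp, if_neg (lt_irrefl _), Nat.sub_self]
        exact q.getVert_zero
      rw [hWR, rayWalk_getVert r hradj n d hdn.le] at h1
      exact h1.symm
    exact hmin d (Nat.pos_of_ne_zero hd0) hdn (hv_eq ▸ hv)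
  · -- uniqueness
    intro β n' _ hn'pos hrn' hmin'
    have hββ : r n' ∈ MulAction.orbit Γ (r 0) := ⟨β, hrn'.symm⟩
    have h1 : ¬ n' < n := fun h => hmin n' hn'pos h hββ
    have h2 : ¬ n < n' := fun h => hmin' n hnpos h ⟨α, hα'⟩
    have : n' = n := by omega
    rw [← hrn', this, hα']
end

section
/- Let T be a tree, Γ ≤ Aut(T) with finite vertex stabilizer Γ_{x₀} at a vertex x₀, and let S be the set of γ ∈ Γ \ Γ_{x₀} with ]x₀,γx₀[ ∩ Γx₀ = ∅. Fix α₁,…,αₙ ∈ S such that x₀ lies on the geodesic segment [α_i^{-1}x₀, α_{i+1}x₀] for each i (equivalently, the points x₀, α₁x₀, α₁α₂x₀, …, α₁⋯αₙx₀ are consecutively aligned on a geodesic). Define an equivalence relation on Γ_{x₀}^{n+1} by (β₀,…,βₙ) ∼ (β₀',…,βₙ') iff β_{i−1}^{-1}α_iβ_i = β'_{i−1}{}^{-1}α_iβ'_i for all 1 ≤ i ≤ n. Then every equivalence class has cardinality |Γ_{[x₀, α₁⋯αₙx₀]}| (the pointwise stabilizer of the segment), and the number of classes is |Γ_{x₀}|^{n+1}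 / |Γ_{[x₀, α₁⋯αₙx₀]}|. -/
open SimpleGraph

section Aux

variable {V : Type*} {G : SimpleGraph V}

private lemma aux_path_length_eq_dist (hT : G.IsTree) {a b : V} (p : G.Walk a b)
    (hp : p.IsPath) : p.length = G.dist a b := by
  obtain ⟨q, hq, hql⟩ := hT.isConnected.exists_path_of_dist a b
  rw [← hql]
  exact congrArg Walk.length ((hT.existsUnique_path a b).unique hp hq)

private lemma aux_seg_of_mem_support (hc : G.Connected) {a c v : V} {Q : G.Walk a c}
    (hQ : Q.length = G.dist a c) (hv : v ∈ Q.support) :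
    G.dist a v + G.dist v c = G.dist a c := by
  classical
  have h1 : G.dist a v ≤ (Q.takeUntil v hv).length := dist_le _
  have h2 : G.dist v c ≤ (Q.dropUntil v hv).length := dist_le _
  have h3 := congrArg Walk.length (Q.take_spec hv)
  rw [Walk.length_append] at h3
  have h4 : G.dist a c ≤ G.dist a v + G.dist v c := hc.dist_triangle
  omega

private lemma aux_append_isPath {a b c : V} {p : G.Walk a b} {q : G.Walk b c}
    (hp : p.IsPath) (hq : q.IsPath)
    (h : ∀ v, v ∈ p.support → v ∈ q.support → v = b) : (p.append q).IsPath := by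
  rw [Walk.isPath_def, Walk.support_append]
  have hqn := hq.support_nodup
  rw [q.support_eq_cons] at hqn
  rcases List.nodup_cons.mp hqn with ⟨hbt, htn⟩
  refine List.Nodup.append hp.support_nodup htn ?_
  intro v hv1 hv2
  have : v ∈ q.support := by rw [q.support_eq_cons]; exact List.mem_cons_of_mem _ hv2
  exact absurd (h v hv1 this ▸ hv2) hbt

private lemma aux_seg_unique (hT : G.IsTree) {a b v w : V}
    (hv : G.dist a v + G.dist v b = G.dist a b)
    (hw : G.dist a w + G.dist w b = G.dist a b)
    (hd : G.dist a v = G.dist a w) : v = w := by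
  have hc := hT.isConnected
  obtain ⟨p1, hp1⟩ := hc.exists_walk_length_eq_dist a v
  obtain ⟨p2, hp2⟩ := hc.exists_walk_length_eq_dist v b
  obtain ⟨q1, hq1⟩ := hc.exists_walk_length_eq_dist a w
  obtain ⟨q2, hq2⟩ := hc.exists_walk_length_eq_dist w b
  have hP : (p1.append p2).IsPath :=
    (p1.append p2).isPath_of_length_eq_dist (by rw [Walk.length_append]; omega)
  have hQ : (q1.append q2).IsPath :=
    (q1.append q2).isPath_of_length_eq_dist (by rw [Walk.length_append]; omega)
  have heq : q1.append q2 = p1.append p2 := (hT.existsUnique_path a b).unique hQ hP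
  have hws : w ∈ (p1.append p2).support := by
    rw [← heq]
    exact (Walk.mem_support_append_iff _ _).mpr (Or.inl q1.end_mem_support)
  rcases (Walk.mem_support_append_iff _ _).mp hws with h | h
  · have h5 : G.dist a w + G.dist w v = G.dist a v :=
      aux_seg_of_mem_support hc hp1 h
    have h6 : G.dist w v = 0 := by omega
    exact ((hc.dist_eq_zero_iff).mp h6).symm
  · have h5 : G.dist v w + G.dist w b = G.dist v b :=
      aux_seg_of_mem_support hc hp2 h
    have h6 : G.dist v w = 0 := by omega
    exact (hc.dist_eq_zero_iff).mp h6

variable {Γ : Type*} [Group Γ] [MulAction Γ V]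

private lemma aux_dist_smul (hc : G.Connected)
    (hAdj : ∀ (γ : Γ) (u v : V), G.Adj u v → G.Adj (γ • u) (γ • v))
    (γ : Γ) (u v : V) : G.dist (γ • u) (γ • v) = G.dist u v := by
  have key : ∀ (g : Γ) (u v : V), G.dist (g • u) (g • v) ≤ G.dist u v := by
    intro g u v
    obtain ⟨p, hp⟩ := hc.exists_walk_length_eq_dist u v
    have := dist_le (p.map ⟨fun x => g • x, fun h => hAdj g _ _ h⟩)
    rwa [Walk.length_map, hp] at this
  refine le_antisymm (key γ u v) ?_
  have := key γ⁻¹ (γ • u) (γ • v)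
  simpa using this

private lemma aux_glue (hT : G.IsTree) {a b c e : V}
    (h1 : G.dist a b + G.dist b c = G.dist a c)
    (h2 : G.dist b c + G.dist c e = G.dist b e) (hbc : b ≠ c) :
    G.dist a c + G.dist c e = G.dist a e := by
  have hc := hT.isConnected
  obtain ⟨pab, hab⟩ := hc.exists_walk_length_eq_dist a b
  obtain ⟨pbc, hbcw⟩ := hc.exists_walk_length_eq_dist b c
  obtain ⟨pce, hce⟩ := hc.exists_walk_length_eq_dist c e
  have hQlen : (pab.append pbc).length = G.dist a c := by rw [Walk.length_append]; omega
  have hQ : (pab.append pbc).IsPath := Walk.isPath_of_length_eq_dist _ hQlen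
  have hpce : pce.IsPath := Walk.isPath_of_length_eq_dist _ hce
  have hW : ((pab.append pbc).append pce).IsPath := by
    apply aux_append_isPath hQ hpce
    intro v hv1 hv2
    have hseg1 : G.dist a v + G.dist v c = G.dist a c :=
      aux_seg_of_mem_support hc hQlen hv1
    have hseg2 : G.dist c v + G.dist v e = G.dist c e :=
      aux_seg_of_mem_support hc hce hv2
    have h4 : G.dist b e ≤ G.dist b v + G.dist v e := hc.dist_triangle
    have e2 : G.dist c v = G.dist v c := dist_comm
    have e1 : G.dist b v = G.dist v b := dist_comm
    rcases (Walk.mem_support_append_iff _ _).mp hv1 with h | h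
    · exfalso
      have hvb : G.dist a v + G.dist v b = G.dist a b :=
        aux_seg_of_mem_support hc hab h
      have t1 : G.dist v c ≤ G.dist v b + G.dist b c := hc.dist_triangle
      have h5 : G.dist v c = G.dist v b + G.dist b c := by omega
      have hbc0 : G.dist b c ≠ 0 := fun h0 => hbc ((hc.dist_eq_zero_iff).mp h0)
      omega
    · have hvb : G.dist b v + G.dist v c = G.dist b c :=
        aux_seg_of_mem_support hc hbcw h
      have h6 : G.dist v c = 0 := by omega
      exact (hc.dist_eq_zero_iff).mp h6
  have := aux_path_length_eq_dist hT _ hW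
  rw [Walk.length_append, Walk.length_append] at this
  omega

private lemma aux_seg_trans (hc : G.Connected) {a v b c : V}
    (h1 : G.dist a v + G.dist v b = G.dist a b)
    (h2 : G.dist a b + G.dist b c = G.dist a c) :
    G.dist a v + G.dist v c = G.dist a c := by
  have t1 : G.dist v c ≤ G.dist v b + G.dist b c := hc.dist_triangle
  have t2 : G.dist a c ≤ G.dist a v + G.dist v c := hc.dist_triangle
  omega

private lemma aux_chain_align (hT : G.IsTree) (m : ℕ) (p : ℕ → V)
    (hne : ∀ i, i + 1 ≤ m → p i ≠ p (i + 1))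
    (hloc : ∀ i, i + 2 ≤ m →
      G.dist (p i) (p (i + 1)) + G.dist (p (i + 1)) (p (i + 2)) = G.dist (p i) (p (i + 2))) :
    ∀ i ≤ m, G.dist (p 0) (p i) + G.dist (p i) (p m) = G.dist (p 0) (p m) := by
  have hc := hT.isConnected
  have A : ∀ j, j ≤ m → ∀ i ≤ j,
      G.dist (p 0) (p i) + G.dist (p i) (p j) = G.dist (p 0) (p j) := by
    intro j
    induction j with
    | zero =>
      intro _ i hi
      have : i = 0 := by omega
      subst this
      simp [dist_self]
    | succ j ih =>
      intro hj
      have hA := ih (by omega)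
      have key : G.dist (p 0) (p j) + G.dist (p j) (p (j + 1)) = G.dist (p 0) (p (j + 1)) := by
        cases j with
        | zero => simp [dist_self]
        | succ k =>
          exact aux_glue hT (hA k (Nat.le_succ k)) (hloc k (by omega)) (hne k (by omega))
      intro i hi
      rcases Nat.lt_or_ge i (j + 1) with h | h
      · exact aux_seg_trans hc (hA i (by omega)) key
      · have : i = j + 1 := by omega
        subst this
        simp [dist_self]
  exact A m le_rfl

private lemma aux_fix_seg (hT : G.IsTree)
    (hAdj : ∀ (γ : Γ) (u v : V), G.Adj u v → G.Adj (γ • u) (γ • v))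
    {γ : Γ} {a b v : V} (ha : γ • a = a) (hb : γ • b = b)
    (hv : G.dist a v + G.dist v b = G.dist a b) : γ • v = v := by
  have hc := hT.isConnected
  have h1 : G.dist a (γ • v) = G.dist a v := by
    conv_lhs => rw [← ha]
    rw [aux_dist_smul hc hAdj]
  have h2 : G.dist (γ • v) b = G.dist v b := by
    conv_lhs => rw [← hb]
    rw [aux_dist_smul hc hAdj]
  exact aux_seg_unique hT (by omega) hv h1

end Aux

set_option maxHeartbeats 2000000 in
/-- Counting for the coding: with `Γ` acting on a tree, `Γ_{x₀}` finite,
`α₁,…,αₙ ∈ S` consecutively aligned (`x₀ ∈ [αᵢ⁻¹x₀, α_{i+1}x₀]`), and the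
partial products `P`, consider on `Γ_{x₀}^{n+1}` the equivalence
`(β₀,…,βₙ) ∼ (β₀',…,βₙ') ↔ ∀ i, β_{i-1}⁻¹αᵢβᵢ = β'_{i-1}⁻¹αᵢβ'ᵢ`, encoded by
equality of `F β := (i ↦ β_{i}⁻¹ αᵢ β_{i+1})`.  Each class has cardinality
that of the pointwise stabilizer of the segment `[x₀, α₁⋯αₙx₀]`, and the
number of classes is `|Γ_{x₀}|^{n+1}/|Γ_{[x₀,α₁⋯αₙx₀]}|`. -/
theorem stmt_12 {V : Type*} (G : SimpleGraph V) (hT : G.IsTree)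
    (Γ : Type*) [Group Γ] [MulAction Γ V]
    (hAdj : ∀ (γ : Γ) (u v : V), G.Adj u v → G.Adj (γ • u) (γ • v))
    (x₀ : V) [Finite (MulAction.stabilizer Γ x₀)]
    (n : ℕ) (α : Fin n → Γ)
    (hS : ∀ i : Fin n, α i • x₀ ≠ x₀ ∧
      ∀ v ∈ MulAction.orbit Γ x₀, v ≠ x₀ → v ≠ α i • x₀ →
        G.dist x₀ v + G.dist v (α i • x₀) ≠ G.dist x₀ (α i • x₀))
    (P : Fin (n + 1) → Γ) (hP0 : P 0 = 1)
    (hPs : ∀ i : Fin n, P i.succ = P i.castSucc * α i)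
    (halign : ∀ (i : ℕ) (h1 : i + 1 < n),
      G.dist ((α ⟨i, Nat.lt_of_succ_lt h1⟩)⁻¹ • x₀) x₀ +
          G.dist x₀ (α ⟨i + 1, h1⟩ • x₀) =
        G.dist ((α ⟨i, Nat.lt_of_succ_lt h1⟩)⁻¹ • x₀) (α ⟨i + 1, h1⟩ • x₀)) :
    let F : (Fin (n + 1) → MulAction.stabilizer Γ x₀) → Fin n → Γ :=
      fun β i => ((β i.castSucc : Γ))⁻¹ * α i * (β i.succ : Γ)
    let segStab : Set Γ := {γ : Γ | ∀ v : V,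
      G.dist x₀ v + G.dist v (P (Fin.last n) • x₀) =
        G.dist x₀ (P (Fin.last n) • x₀) → γ • v = v}
    (∀ β, Nat.card {β' : Fin (n + 1) → MulAction.stabilizer Γ x₀ //
        F β' = F β} = Nat.card segStab) ∧
      Nat.card (Set.range F) =
        (Nat.card (MulAction.stabilizer Γ x₀)) ^ (n + 1) / Nat.card segStab := by
  intro F segStab
  have hFdef : F = fun β i => ((β i.castSucc : Γ))⁻¹ * α i * (β i.succ : Γ) := rfl
  have hc := hT.isConnected
  -- partial product facts
  have hPmk : ∀ (k : ℕ) (h1 : k < n) (h2 : k < n + 1) (h3 : k + 1 < n + 1),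
      P ⟨k + 1, h3⟩ = P ⟨k, h2⟩ * α ⟨k, h1⟩ := by
    intro k h1 h2 h3
    exact hPs ⟨k, h1⟩
  set q : ℕ → V := fun k => P ⟨min k n, by omega⟩ • x₀ with hqdef
  have hq' : ∀ (k : ℕ) (hk : k < n + 1), q k = P ⟨k, hk⟩ • x₀ := by
    intro k hk
    have h : (⟨min k n, by omega⟩ : Fin (n + 1)) = ⟨k, hk⟩ := by
      ext; simp; omega
    rw [hqdef]
    simp only [h]
  have hne : ∀ k, k + 1 ≤ n → q k ≠ q (k + 1) := by
    intro k hk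
    rw [hq' k (by omega), hq' (k + 1) (by omega),
      hPmk k (by omega) (by omega) (by omega), mul_smul]
    intro hcon
    exact (hS ⟨k, by omega⟩).1 (MulAction.injective (P ⟨k, by omega⟩) hcon).symm
  have hg := aux_dist_smul (Γ := Γ) hc hAdj
  have hloc : ∀ k, k + 2 ≤ n →
      G.dist (q k) (q (k + 1)) + G.dist (q (k + 1)) (q (k + 2)) =
        G.dist (q k) (q (k + 2)) := by
    intro k hk
    have h1 : k + 1 < n := by omega
    have ha := halign k h1
    have e1 : P (⟨k, by omega⟩ : Fin (n + 1)) • x₀ =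
        P (⟨k + 1, by omega⟩ : Fin (n + 1)) • ((α ⟨k, Nat.lt_of_succ_lt h1⟩)⁻¹ • x₀) := by
      rw [hPmk k (Nat.lt_of_succ_lt h1) (by omega) (by omega), mul_smul, smul_inv_smul]
    have e3 : P (⟨k + 2, by omega⟩ : Fin (n + 1)) • x₀ =
        P (⟨k + 1, by omega⟩ : Fin (n + 1)) • (α ⟨k + 1, h1⟩ • x₀) := by
      rw [hPmk (k + 1) h1 (by omega) (by omega), mul_smul]
    rw [hq' k (by omega), hq' (k + 1) (by omega), hq' (k + 2) (by omega), e1, e3,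
      hg, hg, hg]
    exact ha
  have hchain := aux_chain_align hT n q hne hloc
  have hglobal : ∀ i : Fin (n + 1),
      G.dist x₀ (P i • x₀) + G.dist (P i • x₀) (P (Fin.last n) • x₀) =
        G.dist x₀ (P (Fin.last n) • x₀) := by
    intro i
    have h0 : q 0 = x₀ := by
      rw [hq' 0 (by omega)]
      have : (⟨0, by omega⟩ : Fin (n + 1)) = 0 := rfl
      rw [this, hP0, one_smul]
    have hn : q n = P (Fin.last n) • x₀ := by
      rw [hq' n (by omega)]
      rfl
    have hi : q i.val = P i • x₀ := by
      rw [hq' i.val i.isLt]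
    have := hchain i.val (by omega)
    rwa [h0, hn, hi] at this
  -- the δ computation
  have hdelta : ∀ (β β' : Fin (n + 1) → ↥(MulAction.stabilizer Γ x₀)), F β' = F β →
      ∀ i : Fin (n + 1), (β' i : Γ) * ((β i : Γ))⁻¹ =
        (P i)⁻¹ * ((β' 0 : Γ) * ((β 0 : Γ))⁻¹) * P i := by
    intro β β' hβ' i
    induction i using Fin.induction with
    | zero => rw [hP0]; group
    | succ i ih =>
      have hF := congrFun hβ' i
      simp only [hFdef] at hF
      have e0 : (β' i.succ : Γ) = (α i)⁻¹ * (β' i.castSucc : Γ) *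
          ((β i.castSucc : Γ)⁻¹ * α i * (β i.succ : Γ)) := by
        rw [← hF]; group
      calc (β' i.succ : Γ) * ((β i.succ : Γ))⁻¹
          = (α i)⁻¹ * ((β' i.castSucc : Γ) * ((β i.castSucc : Γ))⁻¹) * α i := by
            rw [e0]; group
        _ = (α i)⁻¹ * ((P i.castSucc)⁻¹ * ((β' 0 : Γ) * ((β 0 : Γ))⁻¹) * P i.castSucc) *
              α i := by rw [ih]
        _ = (P i.succ)⁻¹ * ((β' 0 : Γ) * ((β 0 : Γ))⁻¹) * P i.succ := by
            rw [hPs i]; group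
  have hmem : ∀ (β β' : Fin (n + 1) → ↥(MulAction.stabilizer Γ x₀)), F β' = F β →
      ((β' 0 : Γ) * ((β 0 : Γ))⁻¹) ∈ segStab := by
    intro β β' hβ'
    have hfix : ∀ i : Fin (n + 1),
        ((β' 0 : Γ) * ((β 0 : Γ))⁻¹) • (P i • x₀) = P i • x₀ := by
      intro i
      have h1 : (P i)⁻¹ * ((β' 0 : Γ) * ((β 0 : Γ))⁻¹) * P i ∈
          MulAction.stabilizer Γ x₀ := by
        rw [← hdelta β β' hβ' i]
        exact mul_mem (β' i).2 (inv_mem (β i).2)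
      rw [MulAction.mem_stabilizer_iff] at h1
      have h2 : P i • (((P i)⁻¹ * ((β' 0 : Γ) * ((β 0 : Γ))⁻¹) * P i) • x₀) =
          P i • x₀ := by rw [h1]
      rwa [mul_smul, mul_smul, smul_inv_smul] at h2
    intro v hv
    have h0 : ((β' 0 : Γ) * ((β 0 : Γ))⁻¹) • x₀ = x₀ := by
      have := hfix 0
      rwa [hP0, one_smul] at this
    exact aux_fix_seg hT hAdj h0 (hfix (Fin.last n)) hv
  -- the equivalence between any fiber and segStab
  have fiberEquiv : ∀ β : Fin (n + 1) → ↥(MulAction.stabilizer Γ x₀),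
      {β' : Fin (n + 1) → ↥(MulAction.stabilizer Γ x₀) // F β' = F β} ≃ ↥segStab := by
    intro β
    have hstab : ∀ (d : ↥segStab) (i : Fin (n + 1)),
        (P i)⁻¹ * (d : Γ) * P i * (β i : Γ) ∈ MulAction.stabilizer Γ x₀ := by
      intro d i
      refine mul_mem ?_ (β i).2
      rw [MulAction.mem_stabilizer_iff, mul_smul, mul_smul]
      have hd : (d : Γ) • (P i • x₀) = P i • x₀ := d.2 _ (hglobal i)
      rw [hd, inv_smul_smul]
    have hinvF : ∀ (d : ↥segStab),
        F (fun i => (⟨(P i)⁻¹ * (d : Γ) * P i * (β i : Γ), hstab d i⟩ :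
          ↥(MulAction.stabilizer Γ x₀))) = F β := by
      intro d
      funext i
      simp only [hFdef]
      rw [hPs i]
      group
    refine ⟨fun b => ⟨(b.1 0 : Γ) * ((β 0 : Γ))⁻¹, hmem β b.1 b.2⟩,
      fun d => ⟨fun i => ⟨(P i)⁻¹ * (d : Γ) * P i * (β i : Γ), hstab d i⟩, hinvF d⟩,
      ?_, ?_⟩
    · intro b
      apply Subtype.ext
      funext i
      apply Subtype.ext
      show (P i)⁻¹ * ((b.1 0 : Γ) * ((β 0 : Γ))⁻¹) * P i * (β i : Γ) = (b.1 i : Γ)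
      rw [← hdelta β b.1 b.2 i]
      group
    · intro d
      apply Subtype.ext
      show (P 0)⁻¹ * (d : Γ) * P 0 * (β 0 : Γ) * ((β 0 : Γ))⁻¹ = (d : Γ)
      rw [hP0]; group
  constructor
  · intro β
    exact Nat.card_congr (fiberEquiv β)
  · classical
    have h1mem : (1 : Γ) ∈ segStab := by
      intro v hv; exact one_smul _ v
    have hfix0 : ∀ g : Γ, g ∈ segStab → g • x₀ = x₀ := by
      intro g hg
      exact hg x₀ (by simp)
    haveI hfin : Finite ↥segStab :=
      Finite.of_injective (fun g : ↥segStab =>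
        (⟨g.1, MulAction.mem_stabilizer_iff.mpr (hfix0 g.1 g.2)⟩ :
          ↥(MulAction.stabilizer Γ x₀)))
        (fun a b hab => Subtype.ext (by simpa using congrArg Subtype.val hab))
    haveI hne' : Nonempty ↥segStab := ⟨⟨1, h1mem⟩⟩
    have e2 : ∀ b : Set.range F,
        {a : Fin (n + 1) → ↥(MulAction.stabilizer Γ x₀) // F a = ↑b} ≃ ↥segStab := by
      intro b
      exact (Equiv.subtypeEquivRight (q := fun a => F a = F b.2.choose)
        (fun a => by rw [b.2.choose_spec])).trans (fiberEquiv b.2.choose)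
    have E : (Fin (n + 1) → ↥(MulAction.stabilizer Γ x₀)) ≃
        (Set.range F) × ↥segStab :=
      ((Equiv.sigmaFiberEquiv
          (fun a => (⟨F a, Set.mem_range_self a⟩ : Set.range F))).symm.trans
        ((Equiv.sigmaCongrRight (fun b =>
          (Equiv.subtypeEquivRight (fun a => Subtype.ext_iff)).trans (e2 b))).trans
        (Equiv.sigmaEquivProd _ _)))
    have hcardE := Nat.card_congr E
    rw [Nat.card_prod] at hcardE
    have hA : Nat.card (Fin (n + 1) → ↥(MulAction.stabilizer Γ x₀)) =
        Nat.card ↥(MulAction.stabilizer Γ x₀) ^ (n + 1) := by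
      rw [Nat.card_fun]
      congr 1
      simp [Nat.card_eq_fintype_card]
    rw [← hA, hcardE]
    have hpos : 0 < Nat.card ↥segStab := Nat.card_pos
    exact (Nat.mul_div_cancel _ hpos).symm
end
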